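/- Let k ∈ ℕ, let β = (β_{ij})_{i,j ≥ 0, i+j ≤ 2k} be a bivariate truncated moment sequence of degree 2k, and let φ(x,y) = (a + bx + cy, d' + ex + fy) be an invertible affine map (bf − ce ≠ 0) with transformed sequence β̃ defined by β̃_{ij} := L_β(φ₁(x,y)^i φ₂(x,y)^j). Then M(k)(β) is positive semidefinite if and only if M(k)(β̃) is positive semidefinite, and rank M(k)(β) = rank M(k)(β̃). -/

import Mathlib

/-!
Write `P p = φ₁^{p₁} φ₂^{p₂}` for `p ∈ MIdx k`. Then `M(k)(β̃)_{p p'} = L_β(P p · P p')`, and as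
`φ` is affine, `P p` has degree at most `p₁ + p₂ ≤ k`; expanding both factors in monomials gives
`M(k)(β̃) = Aᵀ M(k)(β) A`, where column `p` of `A` holds the coefficients of `P p`, i.e. `A` is the
matrix of `g ↦ g ∘ φ` on polynomials of degree `≤ k`. The affine inverse of `φ` therefore yields
an inverse of `A`, and congruence by an invertible matrix preserves positive semidefiniteness and
rank.
-/

open Matrix

noncomputable section

/-- Index type for monomials `x^i y^j` with `i + j ≤ k`. -/
abbrev MIdx (k : ℕ) : Type := {p : Fin (k+1) × Fin (k+1) // (p.1 : ℕ) + (p.2 : ℕ) ≤ k}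

/-- The moment matrix `M(k)` of a bivariate truncated moment sequence `β`. -/
def momentMatrix (k : ℕ) (β : ℕ → ℕ → ℝ) : Matrix (MIdx k) (MIdx k) ℝ :=
  fun p q => β ((p.1.1 : ℕ) + (q.1.1 : ℕ)) ((p.1.2 : ℕ) + (q.1.2 : ℕ))

/-- The Riesz functional `L_β` of `β`, sending `Σ a_{ij} x^i y^j` to `Σ a_{ij} β_{ij}`. -/
def riesz (β : ℕ → ℕ → ℝ) (p : MvPolynomial (Fin 2) ℝ) : ℝ :=
  ∑ m ∈ p.support, p.coeff m * β (m 0) (m 1)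

open MvPolynomial

namespace MIdx

variable {k : ℕ}

def exp (q : MIdx k) : Fin 2 →₀ ℕ := Finsupp.single 0 (q.1.1 : ℕ) + Finsupp.single 1 (q.1.2 : ℕ)

@[simp] lemma exp_apply_zero (q : MIdx k) : q.exp 0 = q.1.1 := by simp [exp]

@[simp] lemma exp_apply_one (q : MIdx k) : q.exp 1 = q.1.2 := by simp [exp]

lemma exp_injective : Function.Injective (exp : MIdx k → Fin 2 →₀ ℕ) := by
  intro q q' h
  have h0 := congrArg (· 0) h
  have h1 := congrArg (· 1) h
  simp only [exp_apply_zero, exp_apply_one] at h0 h1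
  exact Subtype.ext (Prod.ext (Fin.ext h0) (Fin.ext h1))

lemma exists_exp_eq {m : Fin 2 →₀ ℕ} (hm : m 0 + m 1 ≤ k) : ∃ q : MIdx k, q.exp = m :=
  ⟨⟨(⟨m 0, by omega⟩, ⟨m 1, by omega⟩), hm⟩, by ext i; fin_cases i <;> simp⟩

end MIdx

section CoeffMatrix

variable {R : Type*} [CommSemiring R] {k : ℕ}

lemma sum_monomial_exp_coeff {g : MvPolynomial (Fin 2) R} (hg : g.totalDegree ≤ k) :
    ∑ q : MIdx k, monomial q.exp (g.coeff q.exp) = g := by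
  have hsupp : g.support ⊆ Finset.univ.image (MIdx.exp (k := k)) := by
    intro m hm
    have hdeg := (le_totalDegree hm).trans hg
    rw [Finsupp.sum_fintype _ _ (fun _ => rfl), Fin.sum_univ_two] at hdeg
    simpa using MIdx.exists_exp_eq hdeg
  conv_rhs => rw [g.as_sum, Finset.sum_subset hsupp (fun m _ hm => by
    rw [notMem_support_iff.mp hm, monomial_zero])]
  rw [Finset.sum_image (fun q _ q' _ h => MIdx.exp_injective h)]

lemma totalDegree_pow_mul_pow_le {g h : MvPolynomial (Fin 2) R} (hg : g.totalDegree ≤ 1)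
    (hh : h.totalDegree ≤ 1) (i j : ℕ) : (g ^ i * h ^ j).totalDegree ≤ i + j :=
  (totalDegree_mul _ _).trans <| add_le_add
    ((totalDegree_pow _ _).trans (mul_le_of_le_one_right' hg))
    ((totalDegree_pow _ _).trans (mul_le_of_le_one_right' hh))

variable (k) in
def coeffMatrix (P : MIdx k → MvPolynomial (Fin 2) R) : Matrix (MIdx k) (MIdx k) R :=
  Matrix.of fun q p => (P p).coeff q.exp

variable (k) in
def substMatrix (g h : MvPolynomial (Fin 2) R) : Matrix (MIdx k) (MIdx k) R :=
  coeffMatrix k fun p => g ^ (p.1.1 : ℕ) * h ^ (p.1.2 : ℕ)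

lemma aeval_monomial_exp (g : Fin 2 → MvPolynomial (Fin 2) R) (q : MIdx k) (c : R) :
    aeval g (monomial q.exp c) = C c * (g 0 ^ (q.1.1 : ℕ) * g 1 ^ (q.1.2 : ℕ)) := by
  rw [aeval_monomial, Finsupp.prod_fintype _ _ (fun _ => pow_zero _), Fin.prod_univ_two]
  simp [algebraMap_eq]

lemma substMatrix_X : substMatrix k (X 0 : MvPolynomial (Fin 2) R) (X 1) = 1 := by
  ext q p
  have hmono : (X 0 ^ (p.1.1 : ℕ) * X 1 ^ (p.1.2 : ℕ) : MvPolynomial (Fin 2) R) =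
      monomial p.exp 1 := by
    simp [MIdx.exp, X_pow_eq_monomial, monomial_mul]
  rw [substMatrix, coeffMatrix, Matrix.of_apply, hmono, coeff_monomial, Matrix.one_apply]
  exact if_congr (MIdx.exp_injective.eq_iff.trans eq_comm) rfl rfl

lemma substMatrix_mul_coeffMatrix (g h : MvPolynomial (Fin 2) R)
    {P : MIdx k → MvPolynomial (Fin 2) R} (hP : ∀ p, (P p).totalDegree ≤ k) :
    substMatrix k g h * coeffMatrix k P = coeffMatrix k fun p => aeval ![g, h] (P p) := by
  ext q p
  conv_rhs => rw [coeffMatrix, Matrix.of_apply, ← sum_monomial_exp_coeff (hP p), map_sum,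
    coeff_sum]
  refine Finset.sum_congr rfl fun s _ => ?_
  rw [aeval_monomial_exp, coeff_C_mul, mul_comm]
  rfl

lemma substMatrix_mul_substMatrix (g₁ g₂ : MvPolynomial (Fin 2) R)
    {h₁ h₂ : MvPolynomial (Fin 2) R} (hh₁ : h₁.totalDegree ≤ 1) (hh₂ : h₂.totalDegree ≤ 1) :
    substMatrix k g₁ g₂ * substMatrix k h₁ h₂ =
      substMatrix k (aeval ![g₁, g₂] h₁) (aeval ![g₁, g₂] h₂) := by
  refine (substMatrix_mul_coeffMatrix g₁ g₂
    fun p => (totalDegree_pow_mul_pow_le hh₁ hh₂ _ _).trans p.2).trans ?_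
  simp only [map_mul, map_pow]
  rfl

end CoeffMatrix

section Riesz

def rieszLinear (β : ℕ → ℕ → ℝ) : MvPolynomial (Fin 2) ℝ →ₗ[ℝ] ℝ :=
  Finsupp.linearCombination ℝ (fun m : Fin 2 →₀ ℕ => β (m 0) (m 1)) ∘ₗ
    (AddMonoidAlgebra.coeffLinearEquiv ℝ).toLinearMap

lemma rieszLinear_apply (β : ℕ → ℕ → ℝ) (p : MvPolynomial (Fin 2) ℝ) :
    rieszLinear β p = riesz β p :=
  rfl

lemma riesz_monomial (β : ℕ → ℕ → ℝ) (m : Fin 2 →₀ ℕ) (c : ℝ) :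
    riesz β (monomial m c) = c * β (m 0) (m 1) := by
  rw [← rieszLinear_apply, rieszLinear, LinearMap.comp_apply]
  exact Finsupp.linearCombination_single ℝ c m

variable {k : ℕ}

lemma riesz_mul_eq_sum (β : ℕ → ℕ → ℝ) {g h : MvPolynomial (Fin 2) ℝ}
    (hg : g.totalDegree ≤ k) (hh : h.totalDegree ≤ k) :
    riesz β (g * h) = ∑ q : MIdx k, ∑ q' : MIdx k,
      g.coeff q.exp * momentMatrix k β q q' * h.coeff q'.exp := by
  conv_lhs => rw [← sum_monomial_exp_coeff hg, ← sum_monomial_exp_coeff hh,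
    Finset.sum_mul_sum, ← rieszLinear_apply]
  simp only [map_sum, monomial_mul, rieszLinear_apply, riesz_monomial]
  refine Finset.sum_congr rfl fun q _ => Finset.sum_congr rfl fun q' _ => ?_
  simp only [Finsupp.add_apply, MIdx.exp_apply_zero, MIdx.exp_apply_one, momentMatrix]
  ring

lemma momentMatrix_riesz_pow_mul_pow (β : ℕ → ℕ → ℝ) {g h : MvPolynomial (Fin 2) ℝ}
    (hg : g.totalDegree ≤ 1) (hh : h.totalDegree ≤ 1) :
    momentMatrix k (fun i j => riesz β (g ^ i * h ^ j)) =
      (substMatrix k g h)ᵀ * momentMatrix k β * substMatrix k g h := by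
  ext p p'
  have hdeg (p : MIdx k) : (g ^ (p.1.1 : ℕ) * h ^ (p.1.2 : ℕ)).totalDegree ≤ k :=
    (totalDegree_pow_mul_pow_le hg hh _ _).trans p.2
  simp only [momentMatrix]
  rw [pow_add, pow_add, mul_mul_mul_comm, riesz_mul_eq_sum β (hdeg p) (hdeg p')]
  simp only [Matrix.mul_apply, Matrix.transpose_apply, Finset.sum_mul]
  rw [Finset.sum_comm]
  rfl

end Riesz

section Affine

variable {R : Type*} [CommSemiring R]

def affinePoly (u v w : R) : MvPolynomial (Fin 2) R := C u + C v * X 0 + C w * X 1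

lemma totalDegree_affinePoly_le (u v w : R) : (affinePoly u v w).totalDegree ≤ 1 := by
  refine (totalDegree_add _ _).trans (max_le ((totalDegree_add _ _).trans (max_le ?_ ?_)) ?_)
  · simp
  all_goals rw [C_mul_X_eq_monomial]; exact (totalDegree_monomial_le _ _).trans (by simp)

lemma aeval_affinePoly_affinePoly (a b c d e f u v w : R) :
    aeval ![affinePoly a b c, affinePoly d e f] (affinePoly u v w) =
      affinePoly (u + v * a + w * d) (v * b + w * e) (v * c + w * f) := by
  simp only [affinePoly, map_add, map_mul, aeval_C, aeval_X, algebraMap_eq]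
  simp only [Matrix.cons_val_zero, Matrix.cons_val_one]
  ring

lemma exists_affinePoly_inverse {K : Type*} [Field K] {a b c d e f : K}
    (hdet : b * f - c * e ≠ 0) :
    ∃ ψ₁ ψ₂ : MvPolynomial (Fin 2) K, ψ₁.totalDegree ≤ 1 ∧ ψ₂.totalDegree ≤ 1 ∧
      aeval ![affinePoly a b c, affinePoly d e f] ψ₁ = X 0 ∧
      aeval ![affinePoly a b c, affinePoly d e f] ψ₂ = X 1 := by
  set D := b * f - c * e
  refine ⟨affinePoly ((c * d - a * f) / D) (f / D) (-c / D),
    affinePoly ((e * a - b * d) / D) (-e / D) (b / D), totalDegree_affinePoly_le _ _ _,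
    totalDegree_affinePoly_le _ _ _, ?_, ?_⟩
  · rw [aeval_affinePoly_affinePoly, show (X 0 : MvPolynomial (Fin 2) K) = affinePoly 0 1 0 by
      simp [affinePoly]]
    congr 1 <;> field_simp <;> ring
  · rw [aeval_affinePoly_affinePoly, show (X 1 : MvPolynomial (Fin 2) K) = affinePoly 0 0 1 by
      simp [affinePoly]]
    congr 1 <;> field_simp <;> ring

end Affine

/-- For an invertible affine map `φ(x,y) = (a + bx + cy, d' + ex + fy)`
with transformed sequence `β̃_{ij} = L_β(φ₁^i φ₂^j)`: `M(k)(β)` is positive semidefinite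
iff `M(k)(β̃)` is, and `rank M(k)(β) = rank M(k)(β̃)`. -/
theorem affine_invariance_momentMatrix (k : ℕ) (β : ℕ → ℕ → ℝ)
    (a b c d' e f : ℝ) (hdet : b * f - c * e ≠ 0) :
    ((momentMatrix k β).PosSemidef ↔
      (momentMatrix k (fun i j => riesz β
        ((MvPolynomial.C a + MvPolynomial.C b * MvPolynomial.X 0 +
            MvPolynomial.C c * MvPolynomial.X 1) ^ i *
         (MvPolynomial.C d' + MvPolynomial.C e * MvPolynomial.X 0 +
            MvPolynomial.C f * MvPolynomial.X 1) ^ j))).PosSemidef) ∧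
    (momentMatrix k β).rank =
      (momentMatrix k (fun i j => riesz β
        ((MvPolynomial.C a + MvPolynomial.C b * MvPolynomial.X 0 +
            MvPolynomial.C c * MvPolynomial.X 1) ^ i *
         (MvPolynomial.C d' + MvPolynomial.C e * MvPolynomial.X 0 +
            MvPolynomial.C f * MvPolynomial.X 1) ^ j))).rank := by
  obtain ⟨ψ₁, ψ₂, hψ₁, hψ₂, hφψ₁, hφψ₂⟩ := exists_affinePoly_inverse (a := a) (d := d') hdet
  have hA : IsUnit (substMatrix k (affinePoly a b c) (affinePoly d' e f)) :=
    (isUnit_iff_isUnit_det _).mpr <| isUnit_det_of_right_inverse <| by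
      rw [substMatrix_mul_substMatrix _ _ hψ₁ hψ₂, hφψ₁, hφψ₂, substMatrix_X]
  rw [show C a + C b * X 0 + C c * X 1 = affinePoly a b c from rfl,
    show C d' + C e * X 0 + C f * X 1 = affinePoly d' e f from rfl,
    momentMatrix_riesz_pow_mul_pow β (totalDegree_affinePoly_le _ _ _)
      (totalDegree_affinePoly_le _ _ _), ← conjTranspose_eq_transpose_of_trivial,
    ← star_eq_conjTranspose]
  refine ⟨hA.posSemidef_star_left_conjugate_iff.symm, ?_⟩
  rw [rank_mul_eq_left_of_isUnit_det _ _ ((isUnit_iff_isUnit_det _).mp hA),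
    rank_mul_eq_right_of_isUnit_det _ _ ((isUnit_iff_isUnit_det _).mp hA.star)]

end
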